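/- arXiv:1507.06187 — 3 statements merged into one kernel-verified Lean document; each statement's English description precedes it below -/
import Mathlib

section
/- If the edges of the complete graph on ℕ are coloured with finitely many colours r, then the vertex set ℕ can be partitioned into at most r pairwise disjoint sets P_0, ..., P_{r-1} such that each nonempty P_i carries a (finite or one-way infinite) path all of whose edges receive colour i. -/
open Cardinal

universe u

variable {V : Type u}

/-- Two walks between the same endpoints intersect only in the endpoints. -/
def IntDisjoint {G : SimpleGraph V} {v w : V} (p q : G.Walk v w) : Prop :=
  ∀ x, x ∈ p.support → x ∈ q.support → x = v ∨ x = w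

/-- `A` is κ-unseparable in `G`: any two distinct vertices of `A` are joined by
κ-many pairwise internally disjoint finite paths. -/
def Unseparable (G : SimpleGraph V) (A : Set V) (κ : Cardinal.{u}) : Prop :=
  ∀ v ∈ A, ∀ w ∈ A, v ≠ w →
    ∃ P : Set (G.Path v w), κ ≤ #P ∧
      ∀ p ∈ P, ∀ q ∈ P, p ≠ q → IntDisjoint (p : G.Path v w).1 (q : G.Path v w).1

/-- A path in Rado's sense inside the graph `G`: a set of vertices together with a
well-ordering such that the set of earlier neighbours of each vertex is cofinal below it. -/
structure RadoPath (G : SimpleGraph V) where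
  verts : Set V
  lt : verts → verts → Prop
  wo : IsWellOrder verts lt
  cofinal : ∀ v x : verts, lt x v → ∃ w : verts, G.Adj ↑w ↑v ∧ lt w v ∧ ¬ lt w x

/-- The order type of a Rado path. -/
noncomputable def RadoPath.otype {G : SimpleGraph V} (P : RadoPath G) : Ordinal.{u} :=
  @Ordinal.type P.verts P.lt P.wo

/-- `P` is concentrated on `A`: for every limit point `y` of `P` and every `x` below `y`,
the interval `[x, y)` contains a neighbour of `y` lying in `A`. -/
def RadoPath.ConcentratedOn {G : SimpleGraph V} (P : RadoPath G) (A : Set V) : Prop :=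
  ∀ y : P.verts, ((∃ x, P.lt x y) ∧ ∀ x, P.lt x y → ∃ z, P.lt x z ∧ P.lt z y) →
    ∀ x : P.verts, P.lt x y →
      ∃ w : P.verts, (↑w : V) ∈ A ∧ G.Adj ↑w ↑y ∧ ¬ P.lt w x ∧ P.lt w y

/-- The subgraph of `G` consisting of the edges of colour `i`. -/
def colGraph (G : SimpleGraph V) {r : ℕ} (c : Sym2 V → Fin r) (i : Fin r) :
    SimpleGraph V where
  Adj a b := G.Adj a b ∧ c s(a, b) = i
  symm := by
    constructor
    intro a b h
    refine ⟨h.1.symm, ?_⟩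
    rw [Sym2.eq_swap]
    exact h.2
  loopless := by constructor; intro a h; exact G.loopless.irrefl a h.1

/-- The restriction of `G` to the vertices in `S` (as a graph on the same vertex type). -/
def restrictTo (G : SimpleGraph V) (S : Set V) : SimpleGraph V where
  Adj a b := G.Adj a b ∧ a ∈ S ∧ b ∈ S
  symm := by constructor; intro a b h; exact ⟨h.1.symm, h.2.2, h.2.1⟩
  loopless := by constructor; intro a h; exact G.loopless.irrefl a h.1

/-- The common neighbourhood `N_G[X] = ⋂_{x ∈ X} N_G(x)`. -/
def commonNbhd (G : SimpleGraph V) (X : Set V) : Set V :=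
  {v | ∀ x ∈ X, G.Adj x v}

/-- `G` is κ-complete: it has at least κ vertices and every vertex has fewer than κ
non-neighbours. -/
def KComplete (G : SimpleGraph V) (κ : Cardinal.{u}) : Prop :=
  κ ≤ #V ∧ ∀ x : V, #{v : V | ¬ G.Adj x v} < κ

/-- `G` is of type `H_{κ,κ}` with decomposition `(A, B)`. -/
def IsHDecomp (G : SimpleGraph V) (κ : Cardinal.{u}) (A B : Set V) : Prop :=
  ∃ a b : Ordinal.{u} → V,
    Set.InjOn a (Set.Iio κ.ord) ∧ Set.InjOn b (Set.Iio κ.ord) ∧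
    a '' Set.Iio κ.ord = A ∧ b '' Set.Iio κ.ord = B ∧
    ∀ ξ ζ : Ordinal.{u}, ξ ≤ ζ → ζ < κ.ord → G.Adj (a ξ) (b ζ)

/-- `G` is of type `H_{κ,κ}` with main class `A`. -/
def IsHType (G : SimpleGraph V) (κ : Cardinal.{u}) (A : Set V) : Prop :=
  ∃ B : Set V, IsHDecomp G κ A B

/-- A finite family of increasing covers, witnessing that a set is (𝒜,κ)-centered. -/
structure CenteredWitness (V : Type u) where
  I : Type
  fin : Finite I
  lam : I → Ordinal.{u}
  fam : I → Ordinal.{u} → Set V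

/-- An 𝒜-box: the intersection `⋂_{i ∈ I} A^i_{f i}`. -/
def CenteredWitness.Box (𝒜 : CenteredWitness V) (f : 𝒜.I → Ordinal.{u}) : Set V :=
  ⋂ i, 𝒜.fam i (f i)

/-- `A` is (𝒜,κ)-centered in `G`. -/
def IsCentered (G : SimpleGraph V) (A : Set V) (𝒜 : CenteredWitness V)
    (κ : Cardinal.{u}) : Prop :=
  (∀ i, ∀ α β : Ordinal.{u}, α ≤ β → β < 𝒜.lam i → 𝒜.fam i α ⊆ 𝒜.fam i β) ∧
  (∀ i, A ⊆ ⋃ α ∈ Set.Iio (𝒜.lam i), 𝒜.fam i α) ∧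
  (∀ f : 𝒜.I → Ordinal.{u}, (∀ i, f i < 𝒜.lam i) → κ ≤ #(commonNbhd G (𝒜.Box f)))

/-- The set `S` carries a (finite or ω-type) path all of whose edges have colour `i`. -/
def CarriesPath {r : ℕ} (c : Sym2 ℕ → Fin r) (i : Fin r) (S : Set ℕ) : Prop :=
  (∃ l : List ℕ, l.Nodup ∧ (↑l.toFinset : Set ℕ) = S ∧
      l.Chain' (fun a b => c s(a, b) = i)) ∨
  (∃ f : ℕ → ℕ, Function.Injective f ∧ Set.range f = S ∧
      ∀ n : ℕ, c s(f n, f (n + 1)) = i)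

/-!
Fix a non-principal ultrafilter `U` on `ℕ`. Every vertex `v` has a `U`-colour: the colour `i`
with `c s(v, w) = i` for `U`-almost every `w`. Process the vertices in increasing order, keeping
pairwise disjoint finite paths, the `i`-th of colour `i` and ending in a vertex of `U`-colour `i`.
An unused vertex `n` of `U`-colour `i` is appended to the `i`-th path: if that path ends in `a`,
then `U`-almost every `w` satisfies `c s(a, w) = i = c s(w, n)`, so some unused `w ≠ n` does and
`a, w, n` extends the path. The paths only grow at their ends, so in the limit each one is a
finite path or an `ω`-path.
-/

open Function Filter

namespace List

variable {α : Type*} {R : α → α → Prop} (L : ℕ → List α) (hpre : ∀ ⦃m n⦄, m ≤ n → L m <+: L n)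
include hpre

theorem exists_path_of_prefix_monotone_of_unbounded (hnodup : ∀ n, (L n).Nodup)
    (hchain : ∀ n, (L n).IsChain R) (hlen : ∀ k, ∃ m, k < (L m).length) :
    ∃ f : ℕ → α, f.Injective ∧ Set.range f = ⋃ n, {x | x ∈ L n} ∧ ∀ k, R (f k) (f (k + 1)) := by
  choose g hg using hlen
  set f : ℕ → α := fun k => (L (g k))[k]'(hg k)
  have getElem_eq : ∀ m k (hk : k < (L m).length), (L m)[k] = f k := fun m k hk =>
    ((hpre (le_max_left m (g k))).getElem hk).trans
      ((hpre (le_max_right m (g k))).getElem (hg k)).symm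
  refine ⟨f, fun k k' hkk' => ?_, ?_, fun k => ?_⟩
  · set M := max (g k) (g k')
    have hk : k < (L M).length := (hg k).trans_le (hpre (le_max_left ..)).length_le
    have hk' : k' < (L M).length := (hg k').trans_le (hpre (le_max_right ..)).length_le
    rwa [← getElem_eq M k hk, ← getElem_eq M k' hk', (hnodup M).getElem_inj_iff] at hkk'
  · ext x
    simp only [Set.mem_range, Set.mem_iUnion, Set.mem_ofPred_eq]
    constructor
    · rintro ⟨k, rfl⟩
      exact ⟨g k, getElem_mem _⟩
    · rintro ⟨m, hx⟩
      obtain ⟨k, hk, rfl⟩ := mem_iff_getElem.1 hx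
      exact ⟨k, (getElem_eq m k hk).symm⟩
  · have hk := hg (k + 1)
    rw [← getElem_eq _ k (Nat.lt_of_succ_lt hk), ← getElem_eq _ _ hk]
    exact isChain_iff_getElem.1 (hchain _) k hk

theorem exists_forall_prefix_of_prefix_monotone_of_bounded {N : ℕ}
    (hlen : ∀ m, (L m).length ≤ N) : ∃ m₀, ∀ n, L n <+: L m₀ := by
  have hbdd : BddAbove (Set.range fun m => (L m).length) := ⟨N, by rintro _ ⟨m, rfl⟩; exact hlen m⟩
  obtain ⟨m₀, hm₀⟩ := Nat.sSup_mem (Set.range_nonempty _) hbdd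
  refine ⟨m₀, fun n => ?_⟩
  rcases le_total n m₀ with h | h
  · exact hpre h
  · rw [(hpre h).eq_of_length_le ((le_csSup hbdd ⟨n, rfl⟩).trans_eq hm₀.symm)]

theorem exists_path_of_prefix_monotone (hnodup : ∀ n, (L n).Nodup)
    (hchain : ∀ n, (L n).IsChain R) :
    (∃ l : List α, l.Nodup ∧ {x | x ∈ l} = ⋃ n, {x | x ∈ L n} ∧ l.IsChain R) ∨
    (∃ f : ℕ → α, f.Injective ∧ Set.range f = ⋃ n, {x | x ∈ L n} ∧
      ∀ k, R (f k) (f (k + 1))) := by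
  by_cases hlen : ∀ k, ∃ m, k < (L m).length
  · exact .inr (exists_path_of_prefix_monotone_of_unbounded L hpre hnodup hchain hlen)
  push Not at hlen
  obtain ⟨N, hN⟩ := hlen
  obtain ⟨m₀, hm₀⟩ := exists_forall_prefix_of_prefix_monotone_of_bounded L hpre hN
  refine .inl ⟨L m₀, hnodup m₀, ?_, hchain m₀⟩
  ext x
  simp only [Set.mem_iUnion, Set.mem_ofPred_eq]
  exact ⟨fun hx => ⟨m₀, hx⟩, fun ⟨n, hx⟩ => (hm₀ n).subset hx⟩

end List

section UpdateAppend

variable {ι α : Type*} [DecidableEq ι] {σ : ι → List α} {i j : ι} {new : List α} {x : α}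

theorem List.mem_update_append :
    x ∈ update σ i (σ i ++ new) j ↔ x ∈ σ j ∨ (j = i ∧ x ∈ new) := by
  rcases eq_or_ne j i with rfl | h <;> simp [*]

theorem List.nodup_update_append (hσ : ∀ j, (σ j).Nodup) (hnew : new.Nodup)
    (hfresh : ∀ x ∈ new, ∀ j, x ∉ σ j) (j : ι) : (update σ i (σ i ++ new) j).Nodup := by
  rcases eq_or_ne j i with rfl | h
  · rw [update_self, List.nodup_append]
    exact ⟨hσ j, hnew, fun x hx y hy hxy => hfresh y hy j (hxy ▸ hx)⟩
  · rw [update_of_ne h]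
    exact hσ j

end UpdateAppend

namespace Rado

variable {κ : Type*} [Finite κ] (c : Sym2 ℕ → κ)

theorem exists_ultraColour (v : ℕ) : ∃ i, ∀ᶠ w in hyperfilter ℕ, c s(v, w) = i :=
  Ultrafilter.eventually_exists_iff.1 (.of_forall fun w => ⟨c s(v, w), rfl⟩)

noncomputable def ultraColour (v : ℕ) : κ := (exists_ultraColour c v).choose

theorem eventually_ultraColour (v : ℕ) :
    ∀ᶠ w in hyperfilter ℕ, c s(v, w) = ultraColour c v :=
  (exists_ultraColour c v).choose_spec

structure IsPathFamily (σ : κ → List ℕ) : Prop where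
  nodup : ∀ i, (σ i).Nodup
  eq_of_mem : ∀ i j x, x ∈ σ i → x ∈ σ j → i = j
  isChain : ∀ i, (σ i).IsChain fun a b => c s(a, b) = i
  ultraColour_getLast : ∀ i, ∀ a ∈ (σ i).getLast?, ultraColour c a = i

noncomputable def bridge (σ : κ → List ℕ) (a n : ℕ) : ℕ :=
  Classical.epsilon fun w =>
    c s(a, w) = ultraColour c n ∧ c s(w, n) = ultraColour c n ∧ w ≠ n ∧ ∀ j, w ∉ σ j

noncomputable def newVertices (σ : κ → List ℕ) (n : ℕ) : List ℕ :=
  match (σ (ultraColour c n)).getLast? with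
  | none => [n]
  | some a => [bridge c σ a n, n]

variable {c}

theorem bridge_spec {σ : κ → List ℕ} (hσ : IsPathFamily c σ) {a n : ℕ}
    (ha : a ∈ (σ (ultraColour c n)).getLast?) :
    c s(a, bridge c σ a n) = ultraColour c n ∧ c s(bridge c σ a n, n) = ultraColour c n ∧
      bridge c σ a n ≠ n ∧ ∀ j, bridge c σ a n ∉ σ j := by
  have hne : ∀ᶠ w in hyperfilter ℕ, w ≠ n := (Set.finite_singleton n).compl_mem_hyperfilter
  have hfresh : ∀ᶠ w in hyperfilter ℕ, ∀ j, w ∉ σ j :=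
    eventually_all.2 fun j => (σ j).finite_toSet.compl_mem_hyperfilter
  have hbridge : ∀ᶠ w in hyperfilter ℕ, c s(a, w) = ultraColour c n ∧
      c s(w, n) = ultraColour c n ∧ w ≠ n ∧ ∀ j, w ∉ σ j := by
    filter_upwards [eventually_ultraColour c a, eventually_ultraColour c n, hne, hfresh]
      with w haw hnw hwn hw
    exact ⟨haw.trans (hσ.ultraColour_getLast _ a ha), by rwa [Sym2.eq_swap], hwn, hw⟩
  exact Classical.epsilon_spec hbridge.exists

theorem newVertices_spec {σ : κ → List ℕ} (hσ : IsPathFamily c σ) {n : ℕ}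
    (hn : ∀ j, n ∉ σ j) :
    (newVertices c σ n).Nodup ∧ (∀ x ∈ newVertices c σ n, ∀ j, x ∉ σ j) ∧
      (σ (ultraColour c n) ++ newVertices c σ n).IsChain
        (fun a b => c s(a, b) = ultraColour c n) ∧
      (newVertices c σ n).getLast? = some n := by
  unfold newVertices
  split
  case h_1 hlast =>
    rw [List.getLast?_eq_none_iff] at hlast
    simp [hlast, hn]
  case h_2 a hlast =>
    obtain ⟨haw, hwn, hwn', hw⟩ := bridge_spec hσ hlast
    refine ⟨by simp [hwn'], by simp [hw, hn], ?_, rfl⟩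
    refine List.isChain_append.2 ⟨hσ.isChain _, by simpa using hwn, ?_⟩
    simp [hlast, haw]

variable (c) [DecidableEq κ]

open Classical in
noncomputable def step (n : ℕ) (σ : κ → List ℕ) : κ → List ℕ :=
  if ∃ j, n ∈ σ j then σ
  else update σ (ultraColour c n) (σ (ultraColour c n) ++ newVertices c σ n)

noncomputable def stage : ℕ → κ → List ℕ
  | 0 => fun _ => []
  | n + 1 => step c n (stage n)

def pathSet (i : κ) : Set ℕ := ⋃ n, {x | x ∈ stage c n i}

variable {c}

theorem isPathFamily_step {σ : κ → List ℕ} (hσ : IsPathFamily c σ) (n : ℕ) :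
    IsPathFamily c (step c n σ) := by
  unfold step
  split_ifs with hn
  · exact hσ
  push Not at hn
  obtain ⟨hnodup, hfresh, hchain, hlast⟩ := newVertices_spec hσ hn
  refine ⟨List.nodup_update_append hσ.nodup hnodup hfresh, fun j k x hj hk => ?_, fun j => ?_,
    fun j a ha => ?_⟩
  · rw [List.mem_update_append] at hj hk
    rcases hj with hj | ⟨rfl, hj⟩ <;> rcases hk with hk | ⟨rfl, hk⟩
    · exact hσ.eq_of_mem j k x hj hk
    · exact absurd hj (hfresh x hk j)
    · exact absurd hk (hfresh x hj k)
    · rfl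
  · rcases eq_or_ne j (ultraColour c n) with rfl | h
    · rwa [update_self]
    · rw [update_of_ne h]
      exact hσ.isChain j
  · rcases eq_or_ne j (ultraColour c n) with rfl | h
    · rw [update_self, List.getLast?_append, hlast, Option.some_or, Option.mem_some_iff] at ha
      rw [← ha]
    · rw [update_of_ne h] at ha
      exact hσ.ultraColour_getLast j a ha

theorem isPathFamily_stage : ∀ n, IsPathFamily c (stage c n)
  | 0 => ⟨by simp [stage], by simp [stage], by simp [stage], by simp [stage]⟩
  | n + 1 => isPathFamily_step (isPathFamily_stage n) n

theorem prefix_step (n : ℕ) (σ : κ → List ℕ) (i : κ) : σ i <+: step c n σ i := by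
  unfold step
  split_ifs
  · exact List.prefix_refl _
  · rcases eq_or_ne i (ultraColour c n) with rfl | h
    · simp
    · simp [update_of_ne h]

theorem stage_prefix_stage {m n : ℕ} (h : m ≤ n) (i : κ) : stage c m i <+: stage c n i := by
  induction n, h using Nat.le_induction with
  | base => exact List.prefix_refl _
  | succ n _ ih => exact ih.trans (prefix_step n _ i)

theorem exists_mem_stage_succ (n : ℕ) : ∃ i, n ∈ stage c (n + 1) i := by
  change ∃ i, n ∈ step c n (stage c n) i
  unfold step
  split_ifs with hn
  · exact hn
  · refine ⟨ultraColour c n, ?_⟩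
    rw [update_self]
    unfold newVertices
    split <;> simp

theorem pairwise_disjoint_pathSet : Pairwise (Disjoint on pathSet c) := by
  intro i j hij
  refine Set.disjoint_left.2 fun x hi hj => hij ?_
  simp only [pathSet, Set.mem_iUnion, Set.mem_ofPred_eq] at hi hj
  obtain ⟨m, hm⟩ := hi
  obtain ⟨m', hm'⟩ := hj
  exact (isPathFamily_stage (max m m')).eq_of_mem i j x
    ((stage_prefix_stage (le_max_left m m') i).subset hm)
    ((stage_prefix_stage (le_max_right m m') j).subset hm')

theorem iUnion_pathSet : ⋃ i, pathSet c i = Set.univ := by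
  refine Set.eq_univ_of_forall fun n => ?_
  obtain ⟨i, hi⟩ := exists_mem_stage_succ (c := c) n
  exact Set.mem_iUnion.2 ⟨i, Set.mem_iUnion.2 ⟨n + 1, hi⟩⟩

theorem carriesPath_pathSet {r : ℕ} (c : Sym2 ℕ → Fin r) (i : Fin r) :
    CarriesPath c i (pathSet c i) := by
  rcases List.exists_path_of_prefix_monotone (fun n => stage c n i)
      (fun _ _ h => stage_prefix_stage h i) (fun n => (isPathFamily_stage n).nodup i)
      (fun n => (isPathFamily_stage n).isChain i) with ⟨l, hl, hS, hR⟩ | hf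
  · exact .inl ⟨l, hl, by rw [List.coe_toFinset]; exact hS, hR⟩
  · exact .inr hf

end Rado

theorem stmt2_general (r : ℕ) (c : Sym2 ℕ → Fin r) :
    ∃ P : Fin r → Set ℕ, Pairwise (Function.onFun Disjoint P) ∧
      (⋃ i, P i) = Set.univ ∧ ∀ i, CarriesPath c i (P i) :=
  ⟨Rado.pathSet c, Rado.pairwise_disjoint_pathSet, Rado.iUnion_pathSet,
    Rado.carriesPath_pathSet c⟩

/-- Rado's theorem: for any finite edge colouring of the complete graph
on ℕ, the vertices can be partitioned into monochromatic paths of different colours. -/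
theorem stmt2 (r : ℕ) (hr : 0 < r) (c : Sym2 ℕ → Fin r) :
    ∃ P : Fin r → Set ℕ, Pairwise (Function.onFun Disjoint P) ∧
      (⋃ i, P i) = Set.univ ∧ ∀ i, CarriesPath c i (P i) :=
  stmt2_general r c
end

section
/- There exists a graph G on vertex set ω₁ such that for every finite set F of vertices the common neighborhood ⋂_{v∈F} N_G(v) is uncountable, yet G contains no path of order type ω₁ in the sense of Rado (equivalently, no subgraph P with a well-ordering ≺ of type ω₁ of its vertices such that for every vertex v, the set of earlier neighbors of v is ≺-cofinal below v). -/
open Cardinal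

universe u

variable {V : Type u}

/-!
Fix a bijection `v ↦ (label v, _)` between `ω₁` and `Finset ω₁ × ω₁`, and join `a < b` whenever
`a ∈ label b`. Every finite `F` is the label of uncountably many vertices, all but countably many
of which lie above `F` and are therefore adjacent to all of `F`.

On the other hand every vertex has only finitely many smaller neighbours. Given a Rado path of
type `ω₁`, a closing-off argument yields a limit position `δ` such that all vertices at positions
below `δ` are smaller (in `ω₁`) than the vertex `w` at position `δ`. The earlier neighbours of `w`
are then among its finitely many smaller neighbours, but at a limit position they must be cofinal,
hence infinite.
-/

open Set Function Order

theorem RadoPath.infinite_setOf_adj_lt {G : SimpleGraph V} (P : RadoPath G) {v : P.verts}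
    (hne : ∃ x, P.lt x v) (hlim : ∀ x, P.lt x v → ∃ z, P.lt x z ∧ P.lt z v) :
    {u : P.verts | G.Adj u v ∧ P.lt u v}.Infinite := by
  let := P.wo
  let := IsWellOrder.linearOrder P.lt
  intro hfin
  obtain ⟨x, hx⟩ := hne
  obtain ⟨u₀, hu₀, hu₀v, -⟩ := P.cofinal v x hx
  obtain ⟨a, ⟨-, hav⟩, hmax⟩ := hfin.exists_maximal ⟨u₀, hu₀, hu₀v⟩
  obtain ⟨z, haz, hzv⟩ := hlim a hav
  obtain ⟨u, hu, huv, hzu⟩ := P.cofinal v z hzv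
  have hau : a < u := lt_of_lt_of_le haz (not_lt.1 hzu)
  exact hau.not_ge (hmax ⟨hu, huv⟩ hau.le)

namespace OmegaOne

abbrev W : Type := (ℵ₁).ord.ToType

theorem mk_W : #W = ℵ₁ := mk_ord_toType _

instance : Uncountable W := by
  rw [← aleph0_lt_mk_iff, mk_W]
  exact aleph0_lt_aleph_one

theorem countable_Iic (x : W) : (Iic x).Countable := by
  have hIio : (Iio x).Countable := by
    rw [← le_aleph0_iff_set_countable, ← lt_aleph_one_iff]
    simpa using mk_Iio_lt x (by rw [mk_W, Ordinal.type_toType])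
  rw [← Iio_insert]
  exact hIio.insert x

theorem exists_forall_lt_of_countable {s : Set W} (hs : s.Countable) : ∃ b, ∀ x ∈ s, x < b := by
  refine not_isCofinal_iff.1 fun hcof => (cof_le hcof).not_gt ?_
  rw [Ordinal.cof_toType, isRegular_aleph_one.cof_ord, lt_aleph_one_iff]
  exact le_aleph0_iff_set_countable.2 hs

theorem exists_isSuccLimit_mapsTo_Iio (m : W → W) :
    ∃ δ : W, IsSuccLimit δ ∧ MapsTo m (Iio δ) (Iio δ) := by
  have step : ∀ a : W, ∃ b, a < b ∧ ∀ x ≤ a, m x < b := fun a => by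
    obtain ⟨b, hb⟩ := exists_forall_lt_of_countable (((countable_Iic a).image m).insert a)
    exact ⟨b, hb a (mem_insert _ _), fun x hx => hb _ (mem_insert_of_mem _ ⟨x, hx, rfl⟩)⟩
  choose next lt_next map_lt_next using step
  let d : ℕ → W := fun n => next^[n] (Classical.arbitrary W)
  have hd : ∀ n, d (n + 1) = next (d n) := fun n => iterate_succ_apply' next n _
  obtain ⟨δ, hδ, hmin⟩ := wellFounded_lt.has_min {y | ∀ n, d n < y}
    ((exists_forall_lt_of_countable (countable_range d)).imp fun b hb n => hb _ ⟨n, rfl⟩)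
  have lt_d : ∀ x < δ, ∃ n, x < d n := fun x hx => by
    by_contra! h
    exact hmin x (fun n => (hd n ▸ lt_next (d n)).trans_le (h (n + 1))) hx
  refine ⟨δ, ⟨not_isMin_iff.2 ⟨d 0, hδ 0⟩, fun b hb => ?_⟩, fun x (hx : x < δ) => ?_⟩
  · obtain ⟨n, hn⟩ := lt_d b hb.lt
    exact hb.2 hn (hδ n)
  · obtain ⟨n, hn⟩ := lt_d x hx
    exact (hd n ▸ map_lt_next (d n) x hn.le).trans (hδ (n + 1))

theorem exists_isSuccLimit_forall_lt_apply_lt {φ : W → W} (hφ : Injective φ) :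
    ∃ δ : W, IsSuccLimit δ ∧ ∀ β < δ, φ β < φ δ := by
  obtain ⟨δ, hδ, hmaps⟩ := exists_isSuccLimit_mapsTo_Iio fun x => max (φ x) (invFun φ x)
  have hclosed : ∀ x < δ, φ x < δ ∧ invFun φ x < δ := fun x hx => max_lt_iff.1 (hmaps hx)
  -- `δ` is closed under `φ` and its left inverse, so `φ δ` cannot lie below `δ`
  have hle : δ ≤ φ δ := not_lt.1 fun h => by
    simpa [leftInverse_invFun hφ δ] using (hclosed _ h).2
  exact ⟨δ, hδ, fun β hβ => (hclosed β hβ).1.trans_le hle⟩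

theorem _root_.RadoPath.otype_ne_of_finite_setOf_adj_lt {G : SimpleGraph W}
    (hG : ∀ w, {u | G.Adj u w ∧ u < w}.Finite) (P : RadoPath G) :
    P.otype ≠ (ℵ₁).ord := by
  intro hP
  let := P.wo
  obtain ⟨f⟩ : Nonempty (((· < ·) : W → W → Prop) ≃r P.lt) :=
    Ordinal.type_eq.1 ((Ordinal.type_toType _).trans hP.symm)
  obtain ⟨δ, hδ, hφ⟩ := exists_isSuccLimit_forall_lt_apply_lt (φ := fun α => (f α : W))
    (Subtype.val_injective.comp f.injective)
  have hpred : ∀ x, P.lt x (f δ) ↔ f.symm x < δ := fun x => by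
    rw [← f.map_rel_iff, f.apply_symm_apply]
  refine P.infinite_setOf_adj_lt (v := f δ) ?_ ?_ ?_
  · obtain ⟨x, hx⟩ := not_isMin_iff.1 hδ.not_isMin
    exact ⟨f x, f.map_rel_iff.2 hx⟩
  · intro x hx
    obtain ⟨c, hcδ, hxc⟩ := hδ.lt_iff_exists_lt.1 ((hpred x).1 hx)
    exact ⟨f c, by simpa using f.map_rel_iff.2 hxc, f.map_rel_iff.2 hcδ⟩
  · refine ((hG _).preimage Subtype.val_injective.injOn).subset fun u ⟨hadj, hu⟩ => ⟨hadj, ?_⟩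
    simpa using hφ _ ((hpred u).1 hu)

noncomputable def labelEquiv : W ≃ Finset W × W :=
  (Cardinal.eq.1 (by simp [mk_finset_of_infinite])).some

noncomputable def label (v : W) : Finset W := (labelEquiv v).1

def labelGraph : SimpleGraph W := SimpleGraph.fromRel fun a b => a < b ∧ a ∈ label b

theorem finite_setOf_labelGraph_adj_lt (w : W) : {u | labelGraph.Adj u w ∧ u < w}.Finite :=
  (label w).finite_toSet.subset fun u ⟨hadj, huw⟩ => by
    simp only [labelGraph, SimpleGraph.fromRel_adj] at hadj
    exact hadj.2.resolve_right (fun h => h.1.asymm huw) |>.2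

theorem not_countable_setOf_label_eq (F : Finset W) : ¬ {v | label v = F}.Countable := by
  have hmaps : MapsTo (fun x => labelEquiv.symm (F, x)) univ {v | label v = F} :=
    fun x _ => by simp [label]
  exact fun hF => not_countable (α := W) <| countable_univ_iff.1 <|
    hmaps.countable_of_injOn (fun x _ y _ h => by simpa using h) hF

theorem not_countable_commonNbhd_labelGraph (F : Finset W) :
    ¬ (commonNbhd labelGraph F).Countable := by
  have hsub : {v | label v = F} ⊆ commonNbhd labelGraph F ∪ ⋃ x ∈ F, Iic x := by
    intro v hv
    by_cases h : ∀ x ∈ F, x < v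
    · exact Or.inl fun x hx => (SimpleGraph.fromRel_adj _ _ _).2
        ⟨(h x hx).ne, Or.inl ⟨h x hx, hv ▸ hx⟩⟩
    · push Not at h
      obtain ⟨x, hx, hvx⟩ := h
      exact Or.inr (mem_biUnion hx hvx)
  exact fun hF => not_countable_setOf_label_eq F <|
    (hF.union (F.countable_toSet.biUnion fun x _ => countable_Iic x)).mono hsub

end OmegaOne

/-- A graph of size ω₁ with all finite common neighbourhoods uncountable
but no path of order type ω₁. -/
theorem stmt4 : ∃ (V : Type) (G : SimpleGraph V), #V = Cardinal.aleph 1 ∧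
    (∀ F : Finset V, ¬ (commonNbhd G ↑F).Countable) ∧
    ¬ ∃ P : RadoPath G, P.otype = (Cardinal.aleph 1).ord :=
  ⟨OmegaOne.W, OmegaOne.labelGraph, OmegaOne.mk_W, OmegaOne.not_countable_commonNbhd_labelGraph,
    fun ⟨P, hP⟩ => P.otype_ne_of_finite_setOf_adj_lt OmegaOne.finite_setOf_labelGraph_adj_lt hP⟩
end

section
/- Let G = (V,E) be a graph, κ a cardinal, and A ⊆ V a set of size κ which is the increasing union of sets A_α (α < cf(κ)) with |A_α| < κ and |⋂_{v ∈ A_α} N_G(v)| = κ for all α < cf(κ). Then there is a subgraph H of G of type H_{κ,κ} with main class A; that is, there are enumerations A = {a_ξ : ξ < κ} and an injective sequence {b_ξ : ξ < κ} of vertices of G with b_ζ adjacent in G to a_ξ for all ξ ≤ ζ < κ. -/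
open Cardinal

universe u

variable {V : Type u}

/-! Rank each `v ∈ A` by the least `α` with `v ∈ A_α` and well-order `A` lexicographically by
rank. An initial segment below `v` lies in `A_{rank v}`, which has fewer than `κ` elements, so
the order type is exactly `κ`; this enumeration `a_ξ` has every initial segment `{a_ξ : ξ ≤ ζ}`
inside a single `A_α`. Hence `N_G[{a_ξ : ξ ≤ ζ}]` has `κ` elements, and `b_ζ` can be chosen in it
distinct from the fewer than `κ` earlier choices `b_ξ`, `ξ < ζ`. -/

open Set

theorem commonNbhd_anti (G : SimpleGraph V) : Antitone (commonNbhd G) :=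
  fun _ _ hXY _ hv x hx => hv x (hXY hx)

theorem mk_image_Iio_lt {κ : Cardinal.{u}} {ζ : Ordinal.{u}} (hζ : ζ < κ.ord)
    (f : Ordinal.{u} → V) : #(f '' Iio ζ) < κ := by
  have h := @mk_image_le_lift _ _ f (Iio ζ)
  rw [mk_Iio_ordinal, lift_lift, lift_le] at h
  exact h.trans_lt (lt_ord.1 hζ)

theorem exists_injOn_Iio_ord_forall_mem [Nonempty V] {κ : Cardinal.{u}}
    (S : Ordinal.{u} → Set V) (hS : ∀ ζ < κ.ord, κ ≤ #(S ζ)) :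
    ∃ b : Ordinal.{u} → V, InjOn b (Iio κ.ord) ∧ ∀ ζ < κ.ord, b ζ ∈ S ζ := by
  classical
  let b : Ordinal.{u} → V := Ordinal.lt_wf.fix fun ζ ih =>
    Classical.epsilon fun v => v ∈ S ζ ∧ ∀ ξ (h : ξ < ζ), v ≠ ih ξ h
  have hb : ∀ ζ < κ.ord, b ζ ∈ S ζ ∧ ∀ ξ < ζ, b ζ ≠ b ξ := by
    intro ζ hζ
    have hfix : b ζ = Classical.epsilon fun v => v ∈ S ζ ∧ ∀ ξ < ζ, v ≠ b ξ :=
      Ordinal.lt_wf.fix_eq _ ζ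
    suffices ∃ v, v ∈ S ζ ∧ ∀ ξ < ζ, v ≠ b ξ from hfix ▸ Classical.epsilon_spec this
    have hsmall : #(b '' Iio ζ) < #(S ζ) := (mk_image_Iio_lt hζ b).trans_le (hS ζ hζ)
    obtain ⟨v, hvS, hvb⟩ := sdiff_nonempty.2 fun h => (mk_le_mk_of_subset h).not_gt hsmall
    exact ⟨v, hvS, fun ξ hξ hv => hvb ⟨ξ, hξ, hv.symm⟩⟩
  refine ⟨b, fun ξ hξ ζ hζ hbξζ => ?_, fun ζ hζ => (hb ζ hζ).1⟩
  rcases lt_trichotomy ξ ζ with h | h | h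
  · exact absurd hbξζ.symm ((hb ζ hζ).2 ξ h)
  · exact h
  · exact absurd hbξζ ((hb ξ hξ).2 ζ h)

theorem exists_bijOn_Iio_ord_monotoneOn {β : Type u} [Nonempty β] {ι : Type*} [LinearOrder ι]
    [WellFoundedLT ι] {κ : Cardinal.{u}} (hβ : #β = κ) (rk : β → ι)
    (hsmall : ∀ v, #{w // rk w ≤ rk v} < κ) :
    ∃ a : Ordinal.{u} → β, BijOn a (Iio κ.ord) univ ∧ MonotoneOn (rk ∘ a) (Iio κ.ord) := by
  -- well-order `β` lexicographically by rank: then every initial segment is smaller than `κ`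
  let r : β → β → Prop := InvImage (Prod.Lex (· < ·) WellOrderingRel) fun v => (rk v, v)
  let toLex : r ↪r Prod.Lex (· < · : ι → ι → Prop) WellOrderingRel :=
    { toFun := fun v => (rk v, v)
      inj' := fun _ _ h => congrArg Prod.snd h
      map_rel_iff' := Iff.rfl }
  have : IsWellOrder β r := toLex.isWellOrder
  let t : β → Ordinal.{u} := Ordinal.typein r
  have hr : ∀ {v w}, r w v → rk w ≤ rk v := fun h => (Prod.lex_iff.1 h).elim le_of_lt (·.1.le)
  have ht : ∀ v, t v < κ.ord := fun v => lt_ord.2 <| by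
    rw [Ordinal.card_typein]
    exact (mk_subtype_le_of_subset fun _ => hr).trans_lt (hsmall v)
  have htype : Ordinal.type r = κ.ord := by
    refine le_antisymm (not_lt.1 fun h => ?_) (ord_le.2 (by rw [Ordinal.card_type, hβ]))
    obtain ⟨v, hv⟩ := Ordinal.typein_surj r h
    exact (ht v).ne hv
  have ht_inv : ∀ ξ < κ.ord, t (Function.invFun t ξ) = ξ := fun ξ hξ =>
    Function.invFun_eq (Ordinal.typein_surj r (htype ▸ hξ))
  refine ⟨Function.invFun t, ⟨mapsTo_univ _ _, fun ξ hξ ζ hζ h => ?_, fun v _ =>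
    ⟨t v, ht v, Function.leftInverse_invFun (Ordinal.typein_injective r) v⟩⟩,
    fun ξ hξ ζ hζ hle => ?_⟩
  · rw [← ht_inv ξ hξ, ← ht_inv ζ hζ, h]
  · rcases hle.lt_or_eq with hlt | rfl
    · exact hr ((Ordinal.typein_lt_typein r).1 (by rwa [← ht_inv ξ hξ, ← ht_inv ζ hζ] at hlt))
    · rfl

theorem exists_enum_of_monotone_cover {A : Set V} [Nonempty A] {κ : Cardinal.{u}} (hA : #A = κ)
    {o : Ordinal.{u}} (Af : Ordinal.{u} → Set V)
    (hmono : ∀ α β, α ≤ β → β < o → Af α ⊆ Af β) (hsize : ∀ α < o, #(Af α) < κ)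
    (hcover : A ⊆ ⋃ α ∈ Iio o, Af α) :
    ∃ a : Ordinal.{u} → V, InjOn a (Iio κ.ord) ∧ a '' Iio κ.ord = A ∧
      ∀ ζ < κ.ord, ∃ α < o, a '' Iic ζ ⊆ Af α := by
  let rk : A → Ordinal.{u} := fun v => sInf {α | α < o ∧ ↑v ∈ Af α}
  have hrk : ∀ v, rk v < o ∧ ↑v ∈ Af (rk v) := fun v => by
    obtain ⟨α, hα, hv⟩ := mem_iUnion₂.1 (hcover v.2)
    exact csInf_mem (show Set.Nonempty {α | α < o ∧ (v : V) ∈ Af α} from ⟨α, hα, hv⟩)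
  have hlower : ∀ {v w}, rk w ≤ rk v → ↑w ∈ Af (rk v) := fun h =>
    hmono _ _ h (hrk _).1 (hrk _).2
  obtain ⟨a, ha, hmon⟩ := exists_bijOn_Iio_ord_monotoneOn hA rk fun v =>
    (mk_le_of_injective (f := fun w : {w // rk w ≤ rk v} => (⟨w.1, hlower w.2⟩ : Af (rk v)))
      fun _ _ h => by simpa [Subtype.ext_iff] using h).trans_lt
      (hsize _ (hrk v).1)
  refine ⟨(↑) ∘ a, Subtype.val_injective.comp_injOn ha.injOn, ?_, fun ζ hζ =>
    ⟨rk (a ζ), (hrk _).1, ?_⟩⟩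
  · rw [image_comp, ha.image_eq, image_univ, Subtype.range_coe]
  · rintro _ ⟨ξ, hξ, rfl⟩
    exact hlower (hmon (hξ.trans_lt hζ) hζ hξ)

/-- Building a subgraph of type H_{κ,κ} with main class `A` from an
increasing cover of `A` by small sets with large common neighbourhoods. -/
theorem stmt10 {V : Type u} (G : SimpleGraph V) (κ : Cardinal.{u}) (hκ : ℵ₀ ≤ κ)
    (A : Set V) (hA : #A = κ)
    (Af : Ordinal.{u} → Set V)
    (hmono : ∀ α β : Ordinal.{u}, α ≤ β → β < κ.ord.cof.ord → Af α ⊆ Af β)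
    (hsize : ∀ α < κ.ord.cof.ord, #(Af α) < κ)
    (hunion : A = ⋃ α ∈ Set.Iio κ.ord.cof.ord, Af α)
    (hnb : ∀ α < κ.ord.cof.ord, #(commonNbhd G (Af α)) = κ) :
    IsHType G κ A := by
  have : Nonempty A := mk_ne_zero_iff.1 (hA ▸ (aleph0_pos.trans_le hκ).ne')
  have : Nonempty V := ⟨(Classical.arbitrary A).1⟩
  obtain ⟨a, ha_inj, ha_img, ha_sub⟩ := exists_enum_of_monotone_cover hA Af hmono hsize hunion.le
  obtain ⟨b, hb_inj, hb_nbhd⟩ := exists_injOn_Iio_ord_forall_mem (κ := κ)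
    (fun ζ => commonNbhd G (a '' Iic ζ)) fun ζ hζ => by
      obtain ⟨α, hα, hsub⟩ := ha_sub ζ hζ
      exact (hnb α hα).ge.trans (mk_le_mk_of_subset (commonNbhd_anti G hsub))
  exact ⟨_, a, b, ha_inj, hb_inj, ha_img, rfl, fun ξ ζ hξζ hζ => hb_nbhd ζ hζ (a ξ) ⟨ξ, hξζ, rfl⟩⟩
end
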